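/- If a reduction sequence from ⟨C[·], M•⟩ in Λ^rb is infinite, then it contains infinitely many applications of the β-step rule ⟨C'[·], (λx.P) N₀ ⃗N⟩ → ⟨C'[·], P[x:=N₀] ⃗N⟩; equivalently, the rewriting system restricted to the non-β rules is terminating. -/

import Mathlib

/-- Lambda terms, extended with "atoms" `⌈M⌉` that wrap a term. -/
inductive Tm : Type
  | var : String → Tm
  | app : Tm → Tm → Tm
  | lam : String → Tm → Tm
  | atom : Tm → Tm
deriving DecidableEq

namespace Tm

/-- A pure lambda term (an element of Λ): contains no atoms. -/
def Pure : Tm → Prop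
  | var _ => True
  | app a b => Pure a ∧ Pure b
  | lam _ m => Pure m
  | atom _ => False

/-- Free variables; atoms have no free variables. -/
def FV : Tm → Finset String
  | var x => {x}
  | app a b => FV a ∪ FV b
  | lam x m => FV m \ {x}
  | atom _ => ∅

/-- Substitution; atoms are unaffected. -/
def subst : Tm → String → Tm → Tm
  | var y, x, N => if y = x then N else var y
  | app a b, x, N => app (a.subst x N) (b.subst x N)
  | lam y m, x, N => if y = x then lam y m else lam y (m.subst x N)
  | atom m, _, _ => atom m

/-- `apps M [N₁,…,Nₙ] = M N₁ ⋯ Nₙ`. -/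
def apps (M : Tm) (Ns : List Tm) : Tm := Ns.foldl app M

/-- Replace each free variable `x` (not in the bound list) by the atom `⌈x⌉`. -/
def bulletAux : List String → Tm → Tm
  | bs, var x => if x ∈ bs then var x else atom (var x)
  | bs, app a b => app (bulletAux bs a) (bulletAux bs b)
  | bs, lam x m => lam x (bulletAux (x :: bs) m)
  | _, atom m => atom m

/-- `M•`: replace each free variable `x` of `M` by the atom `⌈x⌉`. -/
def bullet (M : Tm) : Tm := bulletAux [] M

/-- Read-back `RB : Λ• → Λ`: `RB (M N) = RB M (RB N)`,
`RB (λx.M) = λx.RB (M[x:=⌈x⌉])`, `RB ⌈M⌉ = M` (stated structurally,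
which agrees with the above since `RB (M[x:=⌈x⌉]) = RB M` here). -/
def RB : Tm → Tm
  | var x => var x
  | app a b => app (RB a) (RB b)
  | lam x m => lam x (RB m)
  | atom m => m

end Tm

/-- Membership in Λ• = { M• | M ∈ Λ }. -/
def IsBullet (M : Tm) : Prop := ∃ P : Tm, P.Pure ∧ M = P.bullet

/-- One-step β-reduction (atoms are inert). -/
inductive Beta : Tm → Tm → Prop
  | beta (x M N) : Beta (.app (.lam x M) N) (M.subst x N)
  | appL {M M'} (N) : Beta M M' → Beta (.app M N) (.app M' N)
  | appR (M) {N N'} : Beta N N' → Beta (.app M N) (.app M N')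
  | lam (x) {M M'} : Beta M M' → Beta (.lam x M) (.lam x M')

/-- β-normal form. -/
def NF (M : Tm) : Prop := ∀ N, ¬ Beta M N

/-- One-hole contexts. -/
inductive Ctx : Type
  | hole
  | appL : Ctx → Tm → Ctx
  | appR : Tm → Ctx → Ctx
  | lam : String → Ctx → Ctx

namespace Ctx

/-- `C[M]`: fill the hole of `C` with `M`. -/
def fill : Ctx → Tm → Tm
  | hole, M => M
  | appL C N, M => .app (C.fill M) N
  | appR N C, M => .app N (C.fill M)
  | lam x C, M => .lam x (C.fill M)

/-- Composition of contexts: `(C.comp D)[M] = C[D[M]]`. -/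
def comp : Ctx → Ctx → Ctx
  | hole, D => D
  | appL C N, D => appL (C.comp D) N
  | appR N C, D => appR N (C.comp D)
  | lam x C, D => lam x (C.comp D)

/-- A context over pure lambda terms. -/
def Pure : Ctx → Prop
  | hole => True
  | appL C N => C.Pure ∧ N.Pure
  | appR N C => N.Pure ∧ C.Pure
  | lam _ C => C.Pure

end Ctx

/-- A context is normal iff it maps β-normal forms to β-normal forms. -/
def NormalCtx (C : Ctx) : Prop := ∀ M, NF M → NF (C.fill M)

/-- The set Λ^rb: atoms `⌈M⌉`; pairs `⟨C[·], M⟩` with `M ∈ Λ•`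
(applications `M ⃗N` with head in `Λ•` are encoded inside the `Tm`);
and `⟨C[·], M ⃗N⟩` with `M ∈ Λ^rb`, `⃗N ∈ Λ•`. -/
inductive Rb : Type
  | atom : Tm → Rb
  | pair : Ctx → Tm → Rb
  | papp : Ctx → Rb → List Tm → Rb

namespace Rb

/-- Well-formedness: side conditions of membership in Λ^rb. -/
def WF : Rb → Prop
  | atom M => M.Pure
  | pair C M => C.Pure ∧ IsBullet M
  | papp C M Ns => C.Pure ∧ M.WF ∧ ∀ N ∈ Ns, IsBullet N

/-- Read-back on Λ^rb. -/
def rb : Rb → Tm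
  | atom M => M
  | pair C M => C.fill M.RB
  | papp C M Ns => C.fill (Tm.apps M.rb (Ns.map Tm.RB))

end Rb

/-- The reduction relation on Λ^rb (Definition 4 of the paper). -/
inductive Step : Rb → Rb → Prop
  | collapse (C M) : Step (.pair C (.atom M)) (.atom (C.fill M))
  | lam (C x M) :
      Step (.pair C (.lam x M))
        (.pair (C.comp (.lam x .hole)) (M.subst x (.atom (.var x))))
  | split (C M N₀ Ns) :
      Step (.pair C (Tm.apps (.atom M) (N₀ :: Ns)))
        (.papp C (.pair (.appR M .hole) N₀) Ns)
  | beta (C x M N₀ Ns) :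
      Step (.pair C (Tm.apps (.lam x M) (N₀ :: Ns)))
        (.pair C (Tm.apps (M.subst x N₀) Ns))
  | collapseNil (C M) : Step (.papp C (.atom M) []) (.atom (C.fill M))
  | splitCons (C M N₀ Ns) :
      Step (.papp C (.atom M) (N₀ :: Ns)) (.papp C (.pair (.appR M .hole) N₀) Ns)
  | cong (C Ns) {M M'} : Step M M' → Step (.papp C M Ns) (.papp C M' Ns)

/-- The steps of `Step` that contract a β-redex (rule 4, possibly under head congruence). -/
inductive BStep : Rb → Rb → Prop
  | beta (C x M N₀ Ns) :
      BStep (.pair C (Tm.apps (.lam x M) (N₀ :: Ns)))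
        (.pair C (Tm.apps (M.subst x N₀) Ns))
  | cong (C Ns) {M M'} : BStep M M' → BStep (.papp C M Ns) (.papp C M' Ns)

/-- Contraction of the leftmost β-redex. -/
inductive Leftmost : Tm → Tm → Prop
  | beta (x M N) : Leftmost (.app (.lam x M) N) (M.subst x N)
  | lam (x) {M M'} : Leftmost M M' → Leftmost (.lam x M) (.lam x M')
  | appL {M M'} (N) : (∀ x M₀, M ≠ Tm.lam x M₀) → Leftmost M M' →
      Leftmost (.app M N) (.app M' N)
  | appR (M) {N N'} : NF M → (∀ x M₀, M ≠ Tm.lam x M₀) → Leftmost N N' →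
      Leftmost (.app M N) (.app M N')

/- Count the size of a term with atoms weighing nothing, weigh a pair `⟨C[·], M⟩` by `2 |M| + 1`
and each pending argument `N` of `⟨C[·], P ⃗N⟩` by `2 |N| + 2`. Every non-β rule then strictly
lowers the weight: rule (1) turns a pair into a weightless atom, rule (2) removes a λ and replaces
`x` by the weightless atom `⌈x⌉`, and rule (3) turns the argument `N₀` of `⌈M⌉ N₀ ⃗N` into the pair
`⟨M [·], N₀⟩`, one unit lighter; head congruence preserves the decrease. So the non-β rules
terminate on all of Λ^rb, and an infinite reduction sequence must use rule (4) infinitely often. -/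

namespace Tm

def size : Tm → ℕ
  | var _ => 1
  | app a b => a.size + b.size + 1
  | lam _ m => m.size + 1
  | atom _ => 0

theorem size_apps (X : Tm) (Ns : List Tm) :
    (X.apps Ns).size = X.size + (Ns.map fun N => N.size + 1).sum := by
  induction Ns generalizing X with
  | nil => simp [apps]
  | cons N Ns ih =>
    rw [show X.apps (N :: Ns) = (X.app N).apps Ns from rfl, ih]
    simp only [size, List.map_cons, List.sum_cons]
    ring

theorem size_subst_atom_le (M : Tm) (x : String) (A : Tm) :
    (M.subst x (atom A)).size ≤ M.size := by
  induction M with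
  | var y => unfold subst; split <;> simp [size]
  | app a b iha ihb => simp only [subst, size]; omega
  | lam y m ih => unfold subst; split <;> simp only [size] <;> omega
  | atom => simp [subst]

end Tm

namespace Rb

def weight : Rb → ℕ
  | atom _ => 0
  | pair _ M => 2 * M.size + 1
  | papp _ M Ns => M.weight + 2 * (Ns.map fun N => N.size + 1).sum + 1

end Rb

/-- Rules (1), (2), (3) and their closure under head congruence (rule 5). -/
def NonBetaStep (a b : Rb) : Prop := Step a b ∧ ¬ BStep a b

theorem NonBetaStep.weight_lt {a b : Rb} (h : NonBetaStep a b) : b.weight < a.weight := by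
  obtain ⟨hstep, hβ⟩ := h
  induction hstep with
  | collapse | collapseNil => simp [Rb.weight]
  | lam C x M =>
    have := Tm.size_subst_atom_le M x (.var x)
    simp only [Rb.weight, Tm.size]
    omega
  | split | splitCons => simp [Rb.weight, Tm.size_apps, Tm.size]; omega
  | beta C x M N₀ Ns => exact absurd (BStep.beta C x M N₀ Ns) hβ
  | cong C Ns _ ih =>
    have := ih fun h => hβ (BStep.cong C Ns h)
    simp only [Rb.weight]
    omega

theorem wellFounded_flip_nonBetaStep : WellFounded (flip NonBetaStep) :=
  Subrelation.wf NonBetaStep.weight_lt (InvImage.wf Rb.weight wellFounded_lt)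

theorem infinitely_many_beta_general (f : ℕ → Rb)
    (hstep : ∀ n, Step (f n) (f (n + 1))) :
    ∀ n, ∃ m ≥ n, BStep (f m) (f (m + 1)) := by
  by_contra! hfin
  obtain ⟨n, hn⟩ := hfin
  exact (wellFounded_iff_isEmpty_descending_chain.1 wellFounded_flip_nonBetaStep).elim
    ⟨fun k => f (n + k), fun k => ⟨hstep (n + k), hn (n + k) (Nat.le_add_right n k)⟩⟩

/-- Any infinite reduction sequence from `⟨C[·], M•⟩` contains infinitely many β-steps;
equivalently, the non-β rules alone terminate. -/
theorem infinitely_many_beta (C : Ctx) (M : Tm) (f : ℕ → Rb)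
    (hC : C.Pure) (hM : M.Pure) (h0 : f 0 = Rb.pair C M.bullet)
    (hstep : ∀ n, Step (f n) (f (n + 1))) :
    ∀ n, ∃ m ≥ n, BStep (f m) (f (m + 1)) :=
  infinitely_many_beta_general f hstep
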